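/- arXiv:2207.06859 — 14 statements merged into one kernel-verified Lean document; each statement's English description precedes it below -/
import Mathlib

section
/- Let A be an associative algebra, R : A → A a left A-linear map (R(ab) = aR(b)) and S : A → A a right A-linear map (S(ab) = S(a)b). Then (A, R, S) is a Rota-Baxter system if and only if for all a, b ∈ A, a·R(S(b)) = 0 and S(R(a))·b = 0. -/
section OneSidedLinear

variable {A F : Type*} [NonUnitalNonAssocRing A] [FunLike F A A] [AddHomClass F A A]

theorem map_rotaBaxter_arg_of_left_linear (R : F) (S : A → A)
    (hR : ∀ a b : A, R (a * b) = a * R b) (a b : A) :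
    R (R a * b + a * S b) = R a * R b + a * R (S b) := by
  rw [map_add, hR, hR]

theorem map_rotaBaxter_arg_of_right_linear (R : A → A) (S : F)
    (hS : ∀ a b : A, S (a * b) = S a * b) (a b : A) :
    S (R a * b + a * S b) = S (R a) * b + S a * S b := by
  rw [map_add, hS, hS]

theorem rotaBaxter_left_iff_of_left_linear (R : F) (S : A → A)
    (hR : ∀ a b : A, R (a * b) = a * R b) :
    (∀ a b : A, R a * R b = R (R a * b + a * S b)) ↔ ∀ a b : A, a * R (S b) = 0 := by
  simp only [map_rotaBaxter_arg_of_left_linear R S hR, left_eq_add]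

theorem rotaBaxter_right_iff_of_right_linear (R : A → A) (S : F)
    (hS : ∀ a b : A, S (a * b) = S a * b) :
    (∀ a b : A, S a * S b = S (R a * b + a * S b)) ↔ ∀ a b : A, S (R a) * b = 0 := by
  simp only [map_rotaBaxter_arg_of_right_linear R S hS, right_eq_add]

end OneSidedLinear

/-- For a left `A`-linear `R` and right `A`-linear `S`, `(A, R, S)` is a Rota-Baxter
system iff `a·R(S(b)) = 0` and `S(R(a))·b = 0` for all `a, b`. -/
theorem rbs_iff_orthogonality
    {K A : Type*} [Field K] [NonUnitalRing A] [Module K A]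
    (R S : A →ₗ[K] A)
    (hRleft : ∀ a b : A, R (a * b) = a * R b)
    (hSright : ∀ a b : A, S (a * b) = S a * b) :
    ((∀ a b : A, R a * R b = R (R a * b + a * S b)) ∧
     (∀ a b : A, S a * S b = S (R a * b + a * S b))) ↔
    (∀ a b : A, a * R (S b) = 0 ∧ S (R a) * b = 0) := by
  rw [rotaBaxter_left_iff_of_left_linear R S hRleft,
    rotaBaxter_right_iff_of_right_linear R S hSright]
  simp only [← forall_and]
end

section
/- Let A be a non-degenerate associative algebra, R : A → A left A-linear and S : A → A right A-linear. Then (A, R, S) is a Rota-Baxter system if and only if R∘S = 0 and S∘R = 0. -/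
/-! Left linearity of `R` gives `R (R a * b + a * S b) = R a * R b + a * R (S b)`, so the first
Rota-Baxter identity says exactly that `R (S b)` is annihilated from the left by all of `A`;
dually, the second says that `S (R a)` is annihilated from the right. Non-degeneracy turns both
into `R ∘ S = 0` and `S ∘ R = 0`. -/

section RotaBaxterSystem

variable {A F : Type*} [NonUnitalNonAssocRing A] [FunLike F A A] [AddHomClass F A A]

theorem rotaBaxter_left_iff_mul_comp_eq_zero (R : F) (S : A → A)
    (hRleft : ∀ a b : A, R (a * b) = a * R b) :
    (∀ a b : A, R a * R b = R (R a * b + a * S b)) ↔ ∀ a b : A, a * R (S b) = 0 :=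
  forall₂_congr fun a b => by rw [map_add, hRleft, hRleft, left_eq_add]

theorem rotaBaxter_right_iff_comp_mul_eq_zero (R : A → A) (S : F)
    (hSright : ∀ a b : A, S (a * b) = S a * b) :
    (∀ a b : A, S a * S b = S (R a * b + a * S b)) ↔ ∀ a b : A, S (R a) * b = 0 :=
  forall₂_congr fun a b => by rw [map_add, hSright, hSright, right_eq_add]

end RotaBaxterSystem

/-- For a non-degenerate algebra `A`, left `A`-linear `R` and right `A`-linear `S`,
`(A, R, S)` is a Rota-Baxter system iff `R∘S = 0` and `S∘R = 0`. -/
theorem rbs_iff_orthogonality_nondegenerate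
    {K A : Type*} [Field K] [NonUnitalRing A] [Module K A]
    (R S : A →ₗ[K] A)
    (hnd : ∀ b : A, ((∀ a : A, b * a = 0) ∨ (∀ a : A, a * b = 0)) → b = 0)
    (hRleft : ∀ a b : A, R (a * b) = a * R b)
    (hSright : ∀ a b : A, S (a * b) = S a * b) :
    ((∀ a b : A, R a * R b = R (R a * b + a * S b)) ∧
     (∀ a b : A, S a * S b = S (R a * b + a * S b))) ↔
    ((∀ a : A, R (S a) = 0) ∧ (∀ a : A, S (R a) = 0)) := by
  rw [rotaBaxter_left_iff_mul_comp_eq_zero R S hRleft,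
    rotaBaxter_right_iff_comp_mul_eq_zero R S hSright]
  constructor
  · rintro ⟨hRS, hSR⟩
    exact ⟨fun b => hnd _ (Or.inr fun a => hRS a b), fun a => hnd _ (Or.inl (hSR a))⟩
  · rintro ⟨hRS, hSR⟩
    exact ⟨fun a b => by simp [hRS], fun a b => by simp [hSR]⟩
end

section
/- Let (A, μ, R, S) be a Rota-Baxter system. Define a new binary operation on A by a ⋆ b := R(a)·b + a·S(b). Then ⋆ is associative. -/
/-- For a Rota-Baxter system `(A, R, S)`, the double product `a ⋆ b = R(a)b + aS(b)`
is associative. -/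
theorem rbs_double_product_assoc
    {K A : Type*} [Field K] [NonUnitalRing A] [Module K A]
    (R S : A →ₗ[K] A)
    (hR : ∀ a b : A, R a * R b = R (R a * b + a * S b))
    (hS : ∀ a b : A, S a * S b = S (R a * b + a * S b)) :
    let star : A → A → A := fun a b => R a * b + a * S b
    ∀ a b c : A, star (star a b) c = star a (star b c) := by
  intro star a b c
  simp only [star, ← hR, ← hS]
  noncomm_ring
end

section
/- Let (A, μ, R, S) be a Rota-Baxter system such that R∘S = S∘R. Then (A, ⋆, R, S) is again a Rota-Baxter system, where a ⋆ b := R(a)·b + a·S(b). That is, R(a)⋆R(b) = R(R(a)⋆b + a⋆S(b)) and S(a)⋆S(b) = S(R(a)⋆b + a⋆S(b)) for all a, b ∈ A. -/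
/-- If `(A, R, S)` is a Rota-Baxter system with `R∘S = S∘R`, then
`(A, ⋆, R, S)` is again a Rota-Baxter system, where `a ⋆ b = R(a)b + aS(b)`. -/
theorem rbs_star_is_rbs
    {K A : Type*} [Field K] [NonUnitalRing A] [Module K A]
    (R S : A →ₗ[K] A)
    (hR : ∀ a b : A, R a * R b = R (R a * b + a * S b))
    (hS : ∀ a b : A, S a * S b = S (R a * b + a * S b))
    (hcomm : ∀ a : A, R (S a) = S (R a)) :
    let star : A → A → A := fun a b => R a * b + a * S b
    (∀ a b : A, star (R a) (R b) = R (star (R a) b + star a (S b))) ∧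
    (∀ a b : A, star (S a) (S b) = S (star (R a) b + star a (S b))) := by
  intro star
  constructor <;> intro a b <;> simp only [star]
  · rw [← hcomm, hR, hR, ← map_add, map_add, map_add, map_add]
  · rw [hcomm, hS, hS, ← map_add, map_add, map_add, map_add]
end

section
/- Let (A, R, S) be a Rota-Baxter system and (M, R_M, S_M) a Rota-Baxter system bimodule over it. Then the trivial extension algebra A ⊕ M, with multiplication (a,m)(b,n) = (ab, an + mb) and operators R'(a,m) = (R(a), R_M(m)), S'(a,m) = (S(a), S_M(m)), is a Rota-Baxter system. -/
/-- The trivial extension `A ⊕ M` of a Rota-Baxter system by a Rota-Baxter system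
bimodule is a Rota-Baxter system. -/
theorem trivial_extension_is_rbs
    {K A M : Type*} [Field K] [NonUnitalRing A] [Module K A]
    [AddCommGroup M] [Module K M]
    (R S : A →ₗ[K] A) (RM SM : M →ₗ[K] M)
    (al : A →ₗ[K] M →ₗ[K] M) (ar : M →ₗ[K] A →ₗ[K] M)
    (hal : ∀ (a b : A) (m : M), al (a * b) m = al a (al b m))
    (har : ∀ (m : M) (a b : A), ar (ar m a) b = ar m (a * b))
    (hmid : ∀ (a : A) (m : M) (b : A), ar (al a m) b = al a (ar m b))
    (hR : ∀ a b : A, R a * R b = R (R a * b + a * S b))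
    (hS : ∀ a b : A, S a * S b = S (R a * b + a * S b))
    (h1 : ∀ (a : A) (m : M), al (R a) (RM m) = RM (al (R a) m + al a (SM m)))
    (h2 : ∀ (a : A) (m : M), ar (RM m) (R a) = RM (ar (RM m) a + ar m (S a)))
    (h3 : ∀ (a : A) (m : M), al (S a) (SM m) = SM (al (R a) m + al a (SM m)))
    (h4 : ∀ (a : A) (m : M), ar (SM m) (S a) = SM (ar (RM m) a + ar m (S a))) :
    let mul' : A × M → A × M → A × M := fun p q => (p.1 * q.1, al p.1 q.2 + ar p.2 q.1)
    let R' : A × M → A × M := fun p => (R p.1, RM p.2)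
    let S' : A × M → A × M := fun p => (S p.1, SM p.2)
    (∀ p q : A × M, mul' (R' p) (R' q) = R' (mul' (R' p) q + mul' p (S' q))) ∧
    (∀ p q : A × M, mul' (S' p) (S' q) = S' (mul' (R' p) q + mul' p (S' q))) := by
  intro mul' R' S'
  constructor <;> rintro ⟨a, m⟩ ⟨b, n⟩ <;>
    simp only [mul', R', S', Prod.mk_add_mk, Prod.mk.injEq]
  · exact ⟨by rw [hR], by rw [h1 a n, h2 b m]; simp; abel⟩
  · exact ⟨by rw [hS], by rw [h3 a n, h4 b m]; simp; abel⟩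
end

section
/- Let (A, R, S) be a Rota-Baxter system and M an A-bimodule with linear operators R_M, S_M : M → M. If the trivial extension algebra A ⊕ M with operators R'(a,m) = (R(a), R_M(m)) and S'(a,m) = (S(a), S_M(m)) is a Rota-Baxter system, then (M, R_M, S_M) is a Rota-Baxter system bimodule over (A, R, S). -/
/-- If the trivial extension `A ⊕ M` with operators `(R', S')` extending `(R, S)` by
`(R_M, S_M)` is a Rota-Baxter system, then `(M, R_M, S_M)` is a Rota-Baxter system
bimodule over `(A, R, S)`. -/
theorem trivial_extension_rbs_gives_bimodule
    {K A M : Type*} [Field K] [NonUnitalRing A] [Module K A]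
    [AddCommGroup M] [Module K M]
    (R S : A →ₗ[K] A) (RM SM : M →ₗ[K] M)
    (al : A →ₗ[K] M →ₗ[K] M) (ar : M →ₗ[K] A →ₗ[K] M)
    (hal : ∀ (a b : A) (m : M), al (a * b) m = al a (al b m))
    (har : ∀ (m : M) (a b : A), ar (ar m a) b = ar m (a * b))
    (hmid : ∀ (a : A) (m : M) (b : A), ar (al a m) b = al a (ar m b))
    (hR : ∀ a b : A, R a * R b = R (R a * b + a * S b))
    (hS : ∀ a b : A, S a * S b = S (R a * b + a * S b))
    (hextR : ∀ p q : A × M,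
      (R p.1 * R q.1, al (R p.1) (RM q.2) + ar (RM p.2) (R q.1)) =
      (R (R p.1 * q.1 + p.1 * S q.1),
        RM ((al (R p.1) q.2 + ar (RM p.2) q.1) + (al p.1 (SM q.2) + ar p.2 (S q.1)))))
    (hextS : ∀ p q : A × M,
      (S p.1 * S q.1, al (S p.1) (SM q.2) + ar (SM p.2) (S q.1)) =
      (S (R p.1 * q.1 + p.1 * S q.1),
        SM ((al (R p.1) q.2 + ar (RM p.2) q.1) + (al p.1 (SM q.2) + ar p.2 (S q.1))))) :
    (∀ (a : A) (m : M), al (R a) (RM m) = RM (al (R a) m + al a (SM m))) ∧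
    (∀ (a : A) (m : M), ar (RM m) (R a) = RM (ar (RM m) a + ar m (S a))) ∧
    (∀ (a : A) (m : M), al (S a) (SM m) = SM (al (R a) m + al a (SM m))) ∧
    (∀ (a : A) (m : M), ar (SM m) (S a) = SM (ar (RM m) a + ar m (S a))) := by
  refine ⟨fun a m => ?_, fun a m => ?_, fun a m => ?_, fun a m => ?_⟩
  · have h := congrArg Prod.snd (hextR (a, 0) (0, m))
    simpa using h
  · have h := congrArg Prod.snd (hextR (0, m) (a, 0))
    simpa using h
  · have h := congrArg Prod.snd (hextS (a, 0) (0, m))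
    simpa using h
  · have h := congrArg Prod.snd (hextS (0, m) (a, 0))
    simpa using h
end

section
/- Let (A, μ, R, S) be a Rota-Baxter system and (M, R_M, S_M) a Rota-Baxter system bimodule over it. Define a ▷ (m₁, m₂) := (R(a)m₁ − R_M(a·m₂), S(a)m₂ − S_M(a·m₂)) on M ⊕ M. Then ▷ is a left module action of the algebra (A, ⋆), where a ⋆ b = R(a)b + aS(b): that is, a ▷ (b ▷ (m₁,m₂)) = (a ⋆ b) ▷ (m₁,m₂) for all a, b ∈ A, m₁, m₂ ∈ M. -/
/-- The operation `a ▷ (m₁,m₂) = (R(a)m₁ − R_M(am₂), S(a)m₂ − S_M(am₂))` is a left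
module action of the algebra `(A, ⋆)` on `M ⊕ M`. -/
theorem rbs_dmodule_left_action
    {K A M : Type*} [Field K] [NonUnitalRing A] [Module K A]
    [AddCommGroup M] [Module K M]
    (R S : A →ₗ[K] A) (RM SM : M →ₗ[K] M)
    (al : A →ₗ[K] M →ₗ[K] M) (ar : M →ₗ[K] A →ₗ[K] M)
    (hal : ∀ (a b : A) (m : M), al (a * b) m = al a (al b m))
    (har : ∀ (m : M) (a b : A), ar (ar m a) b = ar m (a * b))
    (hmid : ∀ (a : A) (m : M) (b : A), ar (al a m) b = al a (ar m b))
    (hR : ∀ a b : A, R a * R b = R (R a * b + a * S b))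
    (hS : ∀ a b : A, S a * S b = S (R a * b + a * S b))
    (h1 : ∀ (a : A) (m : M), al (R a) (RM m) = RM (al (R a) m + al a (SM m)))
    (h2 : ∀ (a : A) (m : M), ar (RM m) (R a) = RM (ar (RM m) a + ar m (S a)))
    (h3 : ∀ (a : A) (m : M), al (S a) (SM m) = SM (al (R a) m + al a (SM m)))
    (h4 : ∀ (a : A) (m : M), ar (SM m) (S a) = SM (ar (RM m) a + ar m (S a))) :
    let tl : A → M × M → M × M := fun a p => (al (R a) p.1 - RM (al a p.2), al (S a) p.2 - SM (al a p.2))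
    let tr : M × M → A → M × M := fun p a => (ar p.1 (R a) - RM (ar p.1 a), ar p.2 (S a) - SM (ar p.1 a))
    ∀ (a b : A) (p : M × M), tl a (tl b p) = tl (R a * b + a * S b) p := by
  intro tl tr a b p
  have key1 : al (R (R a * b + a * S b)) p.1 = al (R a) (al (R b) p.1) := by
    rw [← hR, hal]
  have key2 : al (S (R a * b + a * S b)) p.2 = al (S a) (al (S b) p.2) := by
    rw [← hS, hal]
  refine Prod.ext ?_ ?_
  · show al (R a) (al (R b) p.1 - RM (al b p.2)) - RM (al a (al (S b) p.2 - SM (al b p.2)))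
      = al (R (R a * b + a * S b)) p.1 - RM (al (R a * b + a * S b) p.2)
    rw [key1]
    simp only [map_sub, map_add, LinearMap.add_apply, hal, h1]
    abel
  · show al (S a) (al (S b) p.2 - SM (al b p.2)) - SM (al a (al (S b) p.2 - SM (al b p.2)))
      = al (S (R a * b + a * S b)) p.2 - SM (al (R a * b + a * S b) p.2)
    rw [key2]
    simp only [map_sub, map_add, LinearMap.add_apply, hal, h3]
    abel
end

section
/- Let (A, μ, R, S) be a Rota-Baxter system and (M, R_M, S_M) a Rota-Baxter system bimodule. Define (m₁, m₂) ◁ a := (m₁R(a) − R_M(m₁·a), m₂S(a) − S_M(m₁·a)) on M ⊕ M. Then ◁ is a right module action of the algebra (A, ⋆) where a ⋆ b = R(a)b + aS(b): that is, ((m₁,m₂) ◁ a) ◁ b = (m₁,m₂) ◁ (a ⋆ b). -/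
/-- The operation `(m₁,m₂) ◁ a = (m₁R(a) − R_M(m₁a), m₂S(a) − S_M(m₁a))` is a right
module action of the algebra `(A, ⋆)` on `M ⊕ M`. -/
theorem rbs_dmodule_right_action
    {K A M : Type*} [Field K] [NonUnitalRing A] [Module K A]
    [AddCommGroup M] [Module K M]
    (R S : A →ₗ[K] A) (RM SM : M →ₗ[K] M)
    (al : A →ₗ[K] M →ₗ[K] M) (ar : M →ₗ[K] A →ₗ[K] M)
    (hal : ∀ (a b : A) (m : M), al (a * b) m = al a (al b m))
    (har : ∀ (m : M) (a b : A), ar (ar m a) b = ar m (a * b))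
    (hmid : ∀ (a : A) (m : M) (b : A), ar (al a m) b = al a (ar m b))
    (hR : ∀ a b : A, R a * R b = R (R a * b + a * S b))
    (hS : ∀ a b : A, S a * S b = S (R a * b + a * S b))
    (h1 : ∀ (a : A) (m : M), al (R a) (RM m) = RM (al (R a) m + al a (SM m)))
    (h2 : ∀ (a : A) (m : M), ar (RM m) (R a) = RM (ar (RM m) a + ar m (S a)))
    (h3 : ∀ (a : A) (m : M), al (S a) (SM m) = SM (al (R a) m + al a (SM m)))
    (h4 : ∀ (a : A) (m : M), ar (SM m) (S a) = SM (ar (RM m) a + ar m (S a))) :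
    let tl : A → M × M → M × M := fun a p => (al (R a) p.1 - RM (al a p.2), al (S a) p.2 - SM (al a p.2))
    let tr : M × M → A → M × M := fun p a => (ar p.1 (R a) - RM (ar p.1 a), ar p.2 (S a) - SM (ar p.1 a))
    ∀ (p : M × M) (a b : A), tr (tr p a) b = tr p (R a * b + a * S b) := by
  intro tl tr p a b
  simp only [tr, Prod.mk.injEq]
  constructor
  · have e1 : ar (ar p.1 (R a)) (R b) = ar p.1 (R (R a * b + a * S b)) := by
      rw [har, hR]
    have e2 := h2 b (ar p.1 a)
    simp only [map_sub, LinearMap.sub_apply, e1, e2, har, map_add]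
    abel
  · have e1 : ar (ar p.2 (S a)) (S b) = ar p.2 (S (R a * b + a * S b)) := by
      rw [har, hS]
    have e2 := h4 b (ar p.1 a)
    simp only [map_sub, LinearMap.sub_apply, e1, e2, har, map_add]
    abel
end

section
/- Let (A, μ, R, S) be a Rota-Baxter system and (M, R_M, S_M) a Rota-Baxter system bimodule. With a ▷ (m₁,m₂) := (R(a)m₁ − R_M(am₂), S(a)m₂ − S_M(am₂)) and (m₁,m₂) ◁ b := (m₁R(b) − R_M(m₁b), m₂S(b) − S_M(m₁b)), the two actions are compatible: (a ▷ (m₁,m₂)) ◁ b = a ▷ ((m₁,m₂) ◁ b) for all a, b ∈ A and m₁, m₂ ∈ M. Hence M ⊕ M is a bimodule over the algebra (A, ⋆). -/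
/-- The left and right actions of `(A, ⋆)` on `M ⊕ M` are compatible, so `M ⊕ M`
is a bimodule over the algebra `(A, ⋆)`. -/
theorem rbs_dmodule_compat
    {K A M : Type*} [Field K] [NonUnitalRing A] [Module K A]
    [AddCommGroup M] [Module K M]
    (R S : A →ₗ[K] A) (RM SM : M →ₗ[K] M)
    (al : A →ₗ[K] M →ₗ[K] M) (ar : M →ₗ[K] A →ₗ[K] M)
    (hal : ∀ (a b : A) (m : M), al (a * b) m = al a (al b m))
    (har : ∀ (m : M) (a b : A), ar (ar m a) b = ar m (a * b))
    (hmid : ∀ (a : A) (m : M) (b : A), ar (al a m) b = al a (ar m b))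
    (hR : ∀ a b : A, R a * R b = R (R a * b + a * S b))
    (hS : ∀ a b : A, S a * S b = S (R a * b + a * S b))
    (h1 : ∀ (a : A) (m : M), al (R a) (RM m) = RM (al (R a) m + al a (SM m)))
    (h2 : ∀ (a : A) (m : M), ar (RM m) (R a) = RM (ar (RM m) a + ar m (S a)))
    (h3 : ∀ (a : A) (m : M), al (S a) (SM m) = SM (al (R a) m + al a (SM m)))
    (h4 : ∀ (a : A) (m : M), ar (SM m) (S a) = SM (ar (RM m) a + ar m (S a))) :
    let tl : A → M × M → M × M := fun a p => (al (R a) p.1 - RM (al a p.2), al (S a) p.2 - SM (al a p.2))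
    let tr : M × M → A → M × M := fun p a => (ar p.1 (R a) - RM (ar p.1 a), ar p.2 (S a) - SM (ar p.1 a))
    ∀ (a b : A) (p : M × M), tr (tl a p) b = tl a (tr p b) := by
  intro tl tr a b p
  obtain ⟨m1, m2⟩ := p
  simp only [tl, tr, map_sub, map_add, LinearMap.sub_apply]
  refine Prod.ext ?_ ?_ <;>
    simp only [h1, h2, h3, h4, hmid, map_add] <;> abel
end

section
/- Let (A, μ, R, S) be a Rota-Baxter system and let (μ_t, R_t, S_t) with μ_t = Σμᵢtⁱ, R_t = ΣRᵢtⁱ, S_t = ΣSᵢtⁱ be a 1-parameter formal deformation (so that A[[t]] with these structures is a Rota-Baxter system over K[[t]] and μ₀ = μ, R₀ = R, S₀ = S). Then the degree-1 terms satisfy: (i) μ₁ is a Hochschild 2-cocycle of (A, μ); (ii) μ₁(R(a), R(b)) − R(μ₁(R(a),b) + μ₁(a,S(b))) = R₁(R(a)b + aS(b)) − R(a)R₁(b) − R₁(a)R(b) + R(R₁(a)b + aS₁(b)); and (iii) the analogous equation with S in place of R: μ₁(S(a), S(b)) − S(μ₁(R(a),b) + μ₁(a,S(b))) = S₁(R(a)b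 + aS(b)) − S(a)S₁(b) − S₁(a)S(b) + S(R₁(a)b + aS₁(b)). -/
/-- The degree-1 terms of a 1-parameter formal deformation of a Rota-Baxter system
form a 2-cocycle: `μ₁` is a Hochschild 2-cocycle and `(μ₁, R₁, S₁)` satisfy the two
operator equations. -/
theorem rbs_formal_deformation_infinitesimal
    {K A : Type*} [Field K] [NonUnitalRing A] [Module K A]
    (μ : ℕ → (A →ₗ[K] A →ₗ[K] A)) (Rs Ss : ℕ → (A →ₗ[K] A))
    (R S : A →ₗ[K] A)
    (h0 : ∀ a b : A, μ 0 a b = a * b) (hR0 : Rs 0 = R) (hS0 : Ss 0 = S)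
    (hassoc : ∀ (n : ℕ) (a b c : A),
      ∑ i ∈ Finset.range (n + 1),
        (μ i (μ (n - i) a b) c - μ i a (μ (n - i) b c)) = 0)
    (hdefR : ∀ (n : ℕ) (a b : A),
      ∑ i ∈ Finset.range (n + 1), ∑ j ∈ Finset.range (n + 1 - i),
        μ i (Rs j a) (Rs (n - i - j) b) =
      ∑ i ∈ Finset.range (n + 1), ∑ j ∈ Finset.range (n + 1 - i),
        (Rs i (μ j (Rs (n - i - j) a) b) + Rs i (μ j a (Ss (n - i - j) b))))
    (hdefS : ∀ (n : ℕ) (a b : A),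
      ∑ i ∈ Finset.range (n + 1), ∑ j ∈ Finset.range (n + 1 - i),
        μ i (Ss j a) (Ss (n - i - j) b) =
      ∑ i ∈ Finset.range (n + 1), ∑ j ∈ Finset.range (n + 1 - i),
        (Ss i (μ j (Rs (n - i - j) a) b) + Ss i (μ j a (Ss (n - i - j) b)))) :
    (∀ a b c : A,
      a * μ 1 b c - μ 1 (a * b) c + μ 1 a (b * c) - μ 1 a b * c = 0) ∧
    (∀ a b : A,
      μ 1 (R a) (R b) - R (μ 1 (R a) b + μ 1 a (S b)) =
      Rs 1 (R a * b + a * S b) - R a * Rs 1 b - Rs 1 a * R b +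
        R (Rs 1 a * b + a * Ss 1 b)) ∧
    (∀ a b : A,
      μ 1 (S a) (S b) - S (μ 1 (R a) b + μ 1 a (S b)) =
      Ss 1 (R a * b + a * S b) - S a * Ss 1 b - Ss 1 a * S b +
        S (Rs 1 a * b + a * Ss 1 b)) := by

  subst hR0 hS0
  refine ⟨fun a b c => ?_, fun a b => ?_, fun a b => ?_⟩
  · have h := hassoc 1 a b c
    simp only [Finset.sum_range_succ, Finset.sum_range_zero, Nat.sub_self, Nat.sub_zero,
      h0, zero_add] at h
    linear_combination (norm := abel) -h
  · have h := hdefR 1 a b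
    simp only [Finset.sum_range_succ, Finset.sum_range_zero, Nat.sub_self, Nat.sub_zero,
      h0, map_add, zero_add] at h
    simp only [map_add]
    linear_combination (norm := abel) h
  · have h := hdefS 1 a b
    simp only [Finset.sum_range_succ, Finset.sum_range_zero, Nat.sub_self, Nat.sub_zero,
      h0, map_add, zero_add] at h
    simp only [map_add]
    linear_combination (norm := abel) h
end

section
/- Let (A, R, S) be a Rota-Baxter system, (M, R_M, S_M) a Rota-Baxter system bimodule over it, and Ψ : A ⊗ A → M, χ_R, χ_S : A → M linear maps. Define on A ⊕ M: (a,m)·_Ψ(b,n) = (ab, an + mb + Ψ(a,b)), R_χ(a,m) = (R(a), χ_R(a) + R_M(m)), S_χ(a,m) = (S(a), χ_S(a) + S_M(m)). Then (A ⊕ M, ·_Ψ, R_χ, S_χ) is a Rota-Baxter system if and only if: (1) aΨ(b,c) − Ψ(ab,c) + Ψ(a,bc) − Ψ(a,b)c = 0; (2) R(a)χ_R(b) + χ_R(a)R(b) + Ψ(R(a),R(b)) = R_M(χ_R(a)b) + R_M(aχ_S(b)) + χ_R(R(a)b + aS(b)) + R_M(Ψ(R(a),b) + Ψ(a,S(b)));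 (3) S(a)χ_S(b) + χ_S(a)S(b) + Ψ(S(a),S(b)) = S_M(χ_R(a)b) + S_M(aχ_S(b)) + χ_S(R(a)b + aS(b)) + S_M(Ψ(R(a),b) + Ψ(a,S(b))) for all a, b, c ∈ A. -/
/-- The extension data `(Ψ, χ_R, χ_S)` makes `A ⊕ M` into a Rota-Baxter system if and
only if `(Ψ, χ_R, χ_S)` is a 2-cocycle of the Rota-Baxter system `(A, R, S)` with
coefficients in the Rota-Baxter system bimodule `(M, R_M, S_M)`. -/
theorem rbs_extension_iff_two_cocycle
    {K A M : Type*} [Field K] [NonUnitalRing A] [Module K A]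
    [AddCommGroup M] [Module K M]
    (R S : A →ₗ[K] A) (RM SM : M →ₗ[K] M)
    (al : A →ₗ[K] M →ₗ[K] M) (ar : M →ₗ[K] A →ₗ[K] M)
    (hal : ∀ (a b : A) (m : M), al (a * b) m = al a (al b m))
    (har : ∀ (m : M) (a b : A), ar (ar m a) b = ar m (a * b))
    (hmid : ∀ (a : A) (m : M) (b : A), ar (al a m) b = al a (ar m b))
    (hR : ∀ a b : A, R a * R b = R (R a * b + a * S b))
    (hS : ∀ a b : A, S a * S b = S (R a * b + a * S b))
    (h1 : ∀ (a : A) (m : M), al (R a) (RM m) = RM (al (R a) m + al a (SM m)))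
    (h2 : ∀ (a : A) (m : M), ar (RM m) (R a) = RM (ar (RM m) a + ar m (S a)))
    (h3 : ∀ (a : A) (m : M), al (S a) (SM m) = SM (al (R a) m + al a (SM m)))
    (h4 : ∀ (a : A) (m : M), ar (SM m) (S a) = SM (ar (RM m) a + ar m (S a)))
    (Ψ : A →ₗ[K] A →ₗ[K] M) (χR χS : A →ₗ[K] M) :
    let mul' : A × M → A × M → A × M :=
      fun p q => (p.1 * q.1, al p.1 q.2 + ar p.2 q.1 + Ψ p.1 q.1)
    let R' : A × M → A × M := fun p => (R p.1, χR p.1 + RM p.2)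
    let S' : A × M → A × M := fun p => (S p.1, χS p.1 + SM p.2)
    ((∀ p q r : A × M, mul' (mul' p q) r = mul' p (mul' q r)) ∧
     (∀ p q : A × M, mul' (R' p) (R' q) = R' (mul' (R' p) q + mul' p (S' q))) ∧
     (∀ p q : A × M, mul' (S' p) (S' q) = S' (mul' (R' p) q + mul' p (S' q)))) ↔
    ((∀ a b c : A,
        al a (Ψ b c) - Ψ (a * b) c + Ψ a (b * c) - ar (Ψ a b) c = 0) ∧
     (∀ a b : A,
        al (R a) (χR b) + ar (χR a) (R b) + Ψ (R a) (R b) =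
          RM (ar (χR a) b) + RM (al a (χS b)) + χR (R a * b + a * S b) +
            RM (Ψ (R a) b + Ψ a (S b))) ∧
     (∀ a b : A,
        al (S a) (χS b) + ar (χS a) (S b) + Ψ (S a) (S b) =
          SM (ar (χR a) b) + SM (al a (χS b)) + χS (R a * b + a * S b) +
            SM (Ψ (R a) b + Ψ a (S b)))) := by
  intro mul' R' S'
  constructor
  · rintro ⟨H1, H2, H3⟩
    refine ⟨fun a b c => ?_, fun a b => ?_, fun a b => ?_⟩
    · have h := congrArg Prod.snd (H1 (a, 0) (b, 0) (c, 0))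
      simp only [mul', map_zero, map_add, LinearMap.map_zero, LinearMap.zero_apply,
        LinearMap.add_apply, zero_add, add_zero] at h
      linear_combination (norm := module) -h
    · have h := congrArg Prod.snd (H2 (a, 0) (b, 0))
      simp only [mul', R', S', map_zero, map_add, LinearMap.map_zero, LinearMap.zero_apply,
        LinearMap.add_apply, zero_add, add_zero, Prod.fst_add, Prod.snd_add] at h
      simp only [map_add]
      linear_combination (norm := module) h
    · have h := congrArg Prod.snd (H3 (a, 0) (b, 0))
      simp only [mul', R', S', map_zero, map_add, LinearMap.map_zero, LinearMap.zero_apply,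
        LinearMap.add_apply, zero_add, add_zero, Prod.fst_add, Prod.snd_add] at h
      simp only [map_add]
      linear_combination (norm := module) h
  · rintro ⟨C1, C2, C3⟩
    refine ⟨fun p q r => ?_, fun p q => ?_, fun p q => ?_⟩
    · obtain ⟨a, m⟩ := p; obtain ⟨b, n⟩ := q; obtain ⟨c, k⟩ := r
      refine Prod.ext (mul_assoc a b c) ?_
      have h := C1 a b c
      simp only [mul', map_add, LinearMap.add_apply, hal, har, hmid]
      linear_combination (norm := module) -h
    · obtain ⟨a, m⟩ := p; obtain ⟨b, n⟩ := q
      refine Prod.ext (hR a b) ?_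
      have h := C2 a b
      simp only [map_add] at h
      simp only [mul', R', S', Prod.fst_add, Prod.snd_add, map_add, LinearMap.add_apply,
        h1, h2]
      linear_combination (norm := module) h
    · obtain ⟨a, m⟩ := p; obtain ⟨b, n⟩ := q
      refine Prod.ext (hS a b) ?_
      have h := C3 a b
      simp only [map_add] at h
      simp only [mul', R', S', Prod.fst_add, Prod.snd_add, map_add, LinearMap.add_apply,
        h3, h4]
      linear_combination (norm := module) h
end

section
/- Let 0 → (M, R_M, S_M) → (Â, R̂, Ŝ) →^p (A, R, S) → 0 be an abelian extension of Rota-Baxter systems (with M having trivial multiplication) and t : A → Â a linear section of p. Define a·m := t(a)m and m·a := m·t(a) for a ∈ A, m ∈ M. Then these operations are well-defined (independent of the choice of section), make M an A-bimodule, and together with R_M, S_M give M the structure of a Rota-Baxter system bimodule over (A, R, S): in particular R(a)R_M(m) = R_M(R(a)m + aS_M(m)). -/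
/-- Given an abelian extension `0 → M → B → A → 0` of Rota-Baxter systems (here
`M = ker p`, with trivial multiplication) and a section `t` of `p`, the induced
actions `a·m = t(a)m`, `m·a = m·t(a)` are independent of the section, make `ker p`
an `A`-bimodule, and together with the restrictions of `R̂, Ŝ` give it the structure
of a Rota-Baxter system bimodule over `(A, R, S)`. -/
theorem abelian_extension_induces_rbs_bimodule
    {K A B : Type*} [Field K] [NonUnitalRing A] [Module K A]
    [NonUnitalRing B] [Module K B]
    (R S : A →ₗ[K] A) (Rh Sh : B →ₗ[K] B)
    (hRA : ∀ a b : A, R a * R b = R (R a * b + a * S b))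
    (hSA : ∀ a b : A, S a * S b = S (R a * b + a * S b))
    (hRB : ∀ x y : B, Rh x * Rh y = Rh (Rh x * y + x * Sh y))
    (hSB : ∀ x y : B, Sh x * Sh y = Sh (Rh x * y + x * Sh y))
    (p : B →ₗ[K] A)
    (hpmul : ∀ x y : B, p (x * y) = p x * p y)
    (hpsurj : Function.Surjective p)
    (hpR : ∀ x : B, p (Rh x) = R (p x))
    (hpS : ∀ x : B, p (Sh x) = S (p x))
    (hMM : ∀ x y : B, p x = 0 → p y = 0 → x * y = 0)
    (t : A →ₗ[K] B) (ht : ∀ a : A, p (t a) = a) :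
    -- independence of the section
    (∀ t' : A →ₗ[K] B, (∀ a : A, p (t' a) = a) →
      ∀ (a : A) (m : B), p m = 0 → t a * m = t' a * m ∧ m * t a = m * t' a) ∧
    -- the actions land in M = ker p
    (∀ (a : A) (m : B), p m = 0 → p (t a * m) = 0 ∧ p (m * t a) = 0) ∧
    -- A-bimodule structure
    (∀ (a b : A) (m : B), p m = 0 →
      t (a * b) * m = t a * (t b * m) ∧
      (m * t a) * t b = m * t (a * b) ∧
      (t a * m) * t b = t a * (m * t b)) ∧
    -- Rota-Baxter system bimodule equations
    (∀ (a : A) (m : B), p m = 0 →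
      t (R a) * Rh m = Rh (t (R a) * m + t a * Sh m) ∧
      Rh m * t (R a) = Rh (Rh m * t a + m * t (S a)) ∧
      t (S a) * Sh m = Sh (t (R a) * m + t a * Sh m) ∧
      Sh m * t (S a) = Sh (Rh m * t a + m * t (S a))) := by
  have keyL : ∀ x x' m : B, p x = p x' → p m = 0 → x * m = x' * m := by
    intro x x' m hxx hm
    have h0 : (x - x') * m = 0 := hMM _ _ (by simp [hxx]) hm
    rw [sub_mul, sub_eq_zero] at h0
    exact h0
  have keyR : ∀ m x x' : B, p x = p x' → p m = 0 → m * x = m * x' := by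
    intro m x x' hxx hm
    have h0 : m * (x - x') = 0 := hMM _ _ hm (by simp [hxx])
    rw [mul_sub, sub_eq_zero] at h0
    exact h0
  refine ⟨?_, ?_, ?_, ?_⟩
  · intro t' ht' a m hm
    exact ⟨keyL _ _ _ (by rw [ht, ht']) hm, keyR _ _ _ (by rw [ht, ht']) hm⟩
  · intro a m hm
    constructor <;> rw [hpmul] <;> simp [hm]
  · intro a b m hm
    refine ⟨?_, ?_, ?_⟩
    · rw [← mul_assoc]
      exact keyL _ _ _ (by rw [ht, hpmul, ht, ht]) hm
    · rw [mul_assoc]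
      exact keyR _ _ _ (by rw [ht, hpmul, ht, ht]) hm
    · rw [mul_assoc]
  · intro a m hm
    have hmR : p (Rh m) = 0 := by rw [hpR, hm, map_zero]
    have hmS : p (Sh m) = 0 := by rw [hpS, hm, map_zero]
    have e1 : p (t (R a)) = p (Rh (t a)) := by rw [ht, hpR, ht]
    have e2 : p (t (S a)) = p (Sh (t a)) := by rw [ht, hpS, ht]
    refine ⟨?_, ?_, ?_, ?_⟩
    · rw [keyL _ (Rh (t a)) _ e1 hmR, hRB]
      congr 1
      rw [keyL (Rh (t a)) (t (R a)) m e1.symm hm]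
    · rw [keyR (Rh m) _ (Rh (t a)) e1 hmR, hRB]
      congr 1
      rw [keyR m (Sh (t a)) (t (S a)) e2.symm hm]
    · rw [keyL _ (Sh (t a)) _ e2 hmS, hSB]
      congr 1
      rw [keyL (Rh (t a)) (t (R a)) m e1.symm hm]
    · rw [keyR (Sh m) _ (Sh (t a)) e2 hmS, hSB]
      congr 1
      rw [keyR m (Sh (t a)) (t (S a)) e2.symm hm]
end

section
/- Let 0 → M → Â →^p A → 0 be an abelian extension of Rota-Baxter systems and t : A → Â a section of p. Define Ψ(a,b) := t(a)t(b) − t(ab), χ_R(a) := R̂(t(a)) − t(R(a)), χ_S(a) := Ŝ(t(a)) − t(S(a)). Then Ψ, χ_R, χ_S take values in M and satisfy the 2-cocycle equations: aΨ(b,c) − Ψ(ab,c) + Ψ(a,bc) − Ψ(a,b)c = 0, and R(a)χ_R(b) + χ_R(a)R(b) + Ψ(R(a),R(b)) = R_M(χ_R(a)b + aχ_S(b)) + χ_R(R(a)b + aS(b)) + R_M(Ψ(R(a),b) + Ψ(a,S(b))), and the analogous equation with S, S_M, χ_S in place of R, R_M, χ_R on the left-hand output. -/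
/-- Given an abelian extension of Rota-Baxter systems and a section `t`, the maps
`Ψ(a,b) = t(a)t(b) − t(ab)`, `χ_R(a) = R̂(t(a)) − t(R(a))`, `χ_S(a) = Ŝ(t(a)) − t(S(a))`
take values in `M = ker p` and form a 2-cocycle of the Rota-Baxter system `(A, R, S)`
with coefficients in `M`. -/
theorem abelian_extension_two_cocycle
    {K A B : Type*} [Field K] [NonUnitalRing A] [Module K A]
    [NonUnitalRing B] [Module K B]
    (R S : A →ₗ[K] A) (Rh Sh : B →ₗ[K] B)
    (hRA : ∀ a b : A, R a * R b = R (R a * b + a * S b))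
    (hSA : ∀ a b : A, S a * S b = S (R a * b + a * S b))
    (hRB : ∀ x y : B, Rh x * Rh y = Rh (Rh x * y + x * Sh y))
    (hSB : ∀ x y : B, Sh x * Sh y = Sh (Rh x * y + x * Sh y))
    (p : B →ₗ[K] A)
    (hpmul : ∀ x y : B, p (x * y) = p x * p y)
    (hpsurj : Function.Surjective p)
    (hpR : ∀ x : B, p (Rh x) = R (p x))
    (hpS : ∀ x : B, p (Sh x) = S (p x))
    (hMM : ∀ x y : B, p x = 0 → p y = 0 → x * y = 0)
    (t : A →ₗ[K] B) (ht : ∀ a : A, p (t a) = a) :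
    let Ψ : A → A → B := fun a b => t a * t b - t (a * b)
    let χR : A → B := fun a => Rh (t a) - t (R a)
    let χS : A → B := fun a => Sh (t a) - t (S a)
    (∀ a b : A, p (Ψ a b) = 0) ∧
    (∀ a : A, p (χR a) = 0) ∧
    (∀ a : A, p (χS a) = 0) ∧
    (∀ a b c : A,
      t a * Ψ b c - Ψ (a * b) c + Ψ a (b * c) - Ψ a b * t c = 0) ∧
    (∀ a b : A,
      t (R a) * χR b + χR a * t (R b) + Ψ (R a) (R b) =
        Rh (χR a * t b + t a * χS b) + χR (R a * b + a * S b) +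
          Rh (Ψ (R a) b + Ψ a (S b))) ∧
    (∀ a b : A,
      t (S a) * χS b + χS a * t (S b) + Ψ (S a) (S b) =
        Sh (χR a * t b + t a * χS b) + χS (R a * b + a * S b) +
          Sh (Ψ (R a) b + Ψ a (S b))) := by
  intro Ψ χR χS
  have hΨ : ∀ a b : A, p (Ψ a b) = 0 := by
    intro a b
    simp only [Ψ, map_sub, hpmul, ht, sub_self]
  have hχR : ∀ a : A, p (χR a) = 0 := by
    intro a
    simp only [χR, map_sub, hpR, ht, sub_self]
  have hχS : ∀ a : A, p (χS a) = 0 := by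
    intro a
    simp only [χS, map_sub, hpS, ht, sub_self]
  refine ⟨hΨ, hχR, hχS, ?_, ?_, ?_⟩
  · intro a b c
    simp only [Ψ]
    rw [mul_assoc a b c]
    noncomm_ring
  · intro a b
    have hM : Rh (t a) * Rh (t b) =
        Rh (t a) * t (R b) + t (R a) * Rh (t b) - t (R a) * t (R b) := by
      have h0 := hMM (Rh (t a) - t (R a)) (Rh (t b) - t (R b)) (hχR a) (hχR b)
      have h1 : Rh (t a) * Rh (t b) -
          (Rh (t a) * t (R b) + t (R a) * Rh (t b) - t (R a) * t (R b)) =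
          (Rh (t a) - t (R a)) * (Rh (t b) - t (R b)) := by noncomm_ring
      rw [h0] at h1
      exact sub_eq_zero.mp h1
    have harg : (χR a * t b + t a * χS b) + t (R a * b + a * S b) +
        (Ψ (R a) b + Ψ a (S b)) = Rh (t a) * t b + t a * Sh (t b) := by
      simp only [Ψ, χR, χS, map_add]
      noncomm_ring
    have hRHS : Rh (χR a * t b + t a * χS b) + χR (R a * b + a * S b) +
        Rh (Ψ (R a) b + Ψ a (S b)) =
        Rh (t a) * Rh (t b) - t (R (R a * b + a * S b)) := by
      simp only [χR]
      rw [hRB, ← harg]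
      simp only [map_add]
      abel
    rw [hRHS]
    simp only [Ψ, χR]
    rw [← hRA a b, hM]
    noncomm_ring
  · intro a b
    have hM : Sh (t a) * Sh (t b) =
        Sh (t a) * t (S b) + t (S a) * Sh (t b) - t (S a) * t (S b) := by
      have h0 := hMM (Sh (t a) - t (S a)) (Sh (t b) - t (S b)) (hχS a) (hχS b)
      have h1 : Sh (t a) * Sh (t b) -
          (Sh (t a) * t (S b) + t (S a) * Sh (t b) - t (S a) * t (S b)) =
          (Sh (t a) - t (S a)) * (Sh (t b) - t (S b)) := by noncomm_ring
      rw [h0] at h1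
      exact sub_eq_zero.mp h1
    have harg : (χR a * t b + t a * χS b) + t (R a * b + a * S b) +
        (Ψ (R a) b + Ψ a (S b)) = Rh (t a) * t b + t a * Sh (t b) := by
      simp only [Ψ, χR, χS, map_add]
      noncomm_ring
    have hRHS : Sh (χR a * t b + t a * χS b) + χS (R a * b + a * S b) +
        Sh (Ψ (R a) b + Ψ a (S b)) =
        Sh (t a) * Sh (t b) - t (S (R a * b + a * S b)) := by
      simp only [χS]
      rw [hSB, ← harg]
      simp only [map_add]
      abel
    rw [hRHS]
    simp only [Ψ, χS]
    rw [← hSA a b, hM]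
    noncomm_ring
end

section
/- With the notation of an abelian extension of Rota-Baxter systems and two sections t₁, t₂ of p, set γ := t₁ − t₂ : A → M and let (Ψᵢ, χ_{R,i}, χ_{S,i}) be the 2-cocycles associated to tᵢ. Then Ψ₁(a,b) − Ψ₂(a,b) = aγ(b) + γ(a)b − γ(ab), χ_{R,1}(a) − χ_{R,2}(a) = R_M(γ(a)) − γ(R(a)), and χ_{S,1}(a) − χ_{S,2}(a) = S_M(γ(a)) − γ(S(a)). Hence the two 2-cocycles differ by a coboundary. -/
theorem mul_sub_mul_eq_of_sub_mul_sub_eq_zero {B : Type*} [NonUnitalRing B] {x x' y y' : B}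
    (h : (x - x') * (y - y') = 0) :
    x * y - x' * y' = x' * (y - y') + (x - x') * y' := by
  calc x * y - x' * y'
      = (x' + (x - x')) * (y' + (y - y')) - x' * y' := by simp only [add_sub_cancel]
    _ = x' * (y - y') + (x - x') * y' + (x - x') * (y - y') := by noncomm_ring
    _ = x' * (y - y') + (x - x') * y' := by rw [h, add_zero]

theorem map_sub_sub_sub_map_sub {F B : Type*} [AddCommGroup B] [FunLike F B B]
    [AddMonoidHomClass F B B] (f : F) (x x' y y' : B) :
    (f x - y) - (f x' - y') = f (x - x') - (y - y') := by
  rw [map_sub, sub_sub_sub_comm]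

theorem abelian_extension_cocycles_cohomologous_general
    {K A B : Type*} [Field K] [NonUnitalRing A] [Module K A]
    [NonUnitalRing B] [Module K B]
    (R S : A →ₗ[K] A) (Rh Sh : B →ₗ[K] B)
    (p : B →ₗ[K] A)
    (hMM : ∀ x y : B, p x = 0 → p y = 0 → x * y = 0)
    (t : A →ₗ[K] B) (ht : ∀ a : A, p (t a) = a)
    (t₂ : A →ₗ[K] B) (ht₂ : ∀ a : A, p (t₂ a) = a) :
    let γ : A → B := fun a => t a - t₂ a
    (∀ a b : A,
      (t a * t b - t (a * b)) - (t₂ a * t₂ b - t₂ (a * b)) =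
        t₂ a * γ b + γ a * t₂ b - γ (a * b)) ∧
    (∀ a : A,
      (Rh (t a) - t (R a)) - (Rh (t₂ a) - t₂ (R a)) = Rh (γ a) - γ (R a)) ∧
    (∀ a : A,
      (Sh (t a) - t (S a)) - (Sh (t₂ a) - t₂ (S a)) = Sh (γ a) - γ (S a)) := by
  intro γ
  have hγ (a : A) : p (γ a) = 0 := by simp only [γ, map_sub, ht, ht₂, sub_self]
  refine ⟨fun a b => ?_, fun a => map_sub_sub_sub_map_sub Rh _ _ _ _,
    fun a => map_sub_sub_sub_map_sub Sh _ _ _ _⟩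
  rw [sub_sub_sub_comm, mul_sub_mul_eq_of_sub_mul_sub_eq_zero (hMM _ _ (hγ a) (hγ b))]

/-- Two sections `t₁, t₂` of an abelian extension of Rota-Baxter systems give
2-cocycles differing by the coboundary of `γ = t₁ − t₂`. -/
theorem abelian_extension_cocycles_cohomologous
    {K A B : Type*} [Field K] [NonUnitalRing A] [Module K A]
    [NonUnitalRing B] [Module K B]
    (R S : A →ₗ[K] A) (Rh Sh : B →ₗ[K] B)
    (hRA : ∀ a b : A, R a * R b = R (R a * b + a * S b))
    (hSA : ∀ a b : A, S a * S b = S (R a * b + a * S b))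
    (hRB : ∀ x y : B, Rh x * Rh y = Rh (Rh x * y + x * Sh y))
    (hSB : ∀ x y : B, Sh x * Sh y = Sh (Rh x * y + x * Sh y))
    (p : B →ₗ[K] A)
    (hpmul : ∀ x y : B, p (x * y) = p x * p y)
    (hpsurj : Function.Surjective p)
    (hpR : ∀ x : B, p (Rh x) = R (p x))
    (hpS : ∀ x : B, p (Sh x) = S (p x))
    (hMM : ∀ x y : B, p x = 0 → p y = 0 → x * y = 0)
    (t : A →ₗ[K] B) (ht : ∀ a : A, p (t a) = a)
    (t₂ : A →ₗ[K] B) (ht₂ : ∀ a : A, p (t₂ a) = a) :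
    let γ : A → B := fun a => t a - t₂ a
    (∀ a b : A,
      (t a * t b - t (a * b)) - (t₂ a * t₂ b - t₂ (a * b)) =
        t₂ a * γ b + γ a * t₂ b - γ (a * b)) ∧
    (∀ a : A,
      (Rh (t a) - t (R a)) - (Rh (t₂ a) - t₂ (R a)) = Rh (γ a) - γ (R a)) ∧
    (∀ a : A,
      (Sh (t a) - t (S a)) - (Sh (t₂ a) - t₂ (S a)) = Sh (γ a) - γ (S a)) :=
  abelian_extension_cocycles_cohomologous_general R S Rh Sh p hMM t ht t₂ ht₂
end
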